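/- arXiv:1905.08354 — 5 statements merged into one kernel-verified Lean document; each statement's English description precedes it below -/
import Mathlib

section
/- The function g(y) = 1/sin(y)^2 - 1/y^2 is monotonically increasing on (0, π). -/
/-!
Differentiating, `g'(y) = 2 / y ^ 3 - 2 cos y / sin y ^ 3`, so `g` increases wherever
`y ^ 3 cos y < sin y ^ 3`. On `[π/2, π)` the left side is nonpositive; on `(0, π/2)` the Taylor
bounds `y - y ^ 3 / 6 ≤ sin y` and `cos y ≤ 1 - y ^ 2 / 2 + y ^ 4 / 24` reduce the inequality to
`y ^ 7 (9 - y ^ 2) > 0`.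
-/

open Real Set

namespace Real

theorem cos_le_one_sub_sq_div_two_add_pow_four_div (x : ℝ) :
    cos x ≤ 1 - x ^ 2 / 2 + x ^ 4 / 24 := by
  wlog hx : 0 ≤ x
  · simpa [Even.neg_pow (by decide : Even 2), Even.neg_pow (by decide : Even 4)] using
      this (-x) (by linarith)
  let f : ℝ → ℝ := fun x => 1 - x ^ 2 / 2 + x ^ 4 / 24 - cos x
  have hf : ∀ y, HasDerivAt f (-y + y ^ 3 / 6 + sin y) y := fun y => by
    refine ((((hasDerivAt_pow 2 y).div_const 2).const_sub 1).add
      ((hasDerivAt_pow 4 y).div_const 24)).sub (hasDerivAt_cos y) |>.congr_deriv ?_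
    push_cast
    ring
  have hmono : MonotoneOn f (Ici 0) := by
    refine monotoneOn_of_deriv_nonneg (convex_Ici 0) (by fun_prop)
      (fun y _ => (hf y).differentiableAt.differentiableWithinAt) fun y hy => ?_
    rw [interior_Ici] at hy
    rw [(hf y).deriv]
    linarith [sin_ge_sub_cube hy.le]
  have := hmono self_mem_Ici hx hx
  simp only [f, cos_zero] at this
  linarith

theorem pow_three_mul_cos_lt_sin_pow_three {x : ℝ} (hx₀ : 0 < x) (hxπ : x < π) :
    x ^ 3 * cos x < sin x ^ 3 := by
  have hsin : 0 < sin x := sin_pos_of_pos_of_lt_pi hx₀ hxπ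
  rcases le_or_gt (cos x) 0 with hcos | hcos
  · nlinarith [pow_pos hx₀ 3, pow_pos hsin 3]
  have hx2 : x < 2 := by
    have : x < π / 2 := by
      by_contra! h
      linarith [cos_nonpos_of_pi_div_two_le_of_le h (by linarith)]
    linarith [pi_lt_four]
  have hsub : 0 < x - x ^ 3 / 6 := by nlinarith [mul_pos hx₀ hx₀]
  calc x ^ 3 * cos x ≤ x ^ 3 * (1 - x ^ 2 / 2 + x ^ 4 / 24) :=
        mul_le_mul_of_nonneg_left (cos_le_one_sub_sq_div_two_add_pow_four_div x)
          (pow_pos hx₀ 3).le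
    _ < (x - x ^ 3 / 6) ^ 3 := by
        have : 0 < x ^ 7 * (9 - x ^ 2) := mul_pos (pow_pos hx₀ 7) (by nlinarith)
        nlinarith
    _ ≤ sin x ^ 3 := pow_le_pow_left₀ hsub.le (sin_ge_sub_cube hx₀.le) 3

end Real

theorem hasDerivAt_one_div_sin_sq_sub_one_div_sq {y : ℝ} (hs : sin y ≠ 0) (hy : y ≠ 0) :
    HasDerivAt (fun y : ℝ => 1 / sin y ^ 2 - 1 / y ^ 2)
      (2 / y ^ 3 - 2 * cos y / sin y ^ 3) y := by
  simp only [one_div]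
  refine (((hasDerivAt_sin y).pow 2).inv (pow_ne_zero 2 hs)).sub
    ((hasDerivAt_pow 2 y).inv (pow_ne_zero 2 hy)) |>.congr_deriv ?_
  simp only [Pi.pow_apply]
  field_simp
  ring

theorem stmt_1 :
    MonotoneOn (fun y : ℝ => 1 / Real.sin y ^ 2 - 1 / y ^ 2) (Set.Ioo 0 π) := by
  have hderiv : ∀ y ∈ Ioo 0 π, HasDerivAt (fun y : ℝ => 1 / sin y ^ 2 - 1 / y ^ 2)
      (2 / y ^ 3 - 2 * cos y / sin y ^ 3) y := fun y hy =>
    hasDerivAt_one_div_sin_sq_sub_one_div_sq (sin_pos_of_pos_of_lt_pi hy.1 hy.2).ne' hy.1.ne'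
  refine (strictMonoOn_of_deriv_pos (convex_Ioo 0 π)
    (fun y hy => (hderiv y hy).continuousAt.continuousWithinAt) fun y hy => ?_).monotoneOn
  rw [interior_Ioo] at hy
  have hsin := sin_pos_of_pos_of_lt_pi hy.1 hy.2
  rw [(hderiv y hy).deriv, sub_pos, div_lt_div_iff₀ (pow_pos hsin 3) (pow_pos hy.1 3)]
  linarith [pow_three_mul_cos_lt_sin_pow_three hy.1 hy.2]
end

section
/- For any W in (0, 1/2) and any real X with 0 < |X| ≤ 2πW, we have |(X - sin X)/(X sin X)| ≤ (πW/3) · (2πW / sin(2πW)). -/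
/-!
On `(0, π)` the function `(x - sin x) / (x sin x)` is nonnegative, and `x - sin x ≤ x³ / 6` bounds
it by `(x / 6) · (x / sin x)`. Both factors increase with `x`, the second because `sin x / x` is
the slope of a secant of the concave function `sin` through the origin. Evaluating at
`t = 2πW < π` gives the bound for `|X|`, and the function is odd.
-/

open Real

namespace Real

theorem antitoneOn_sin_div : AntitoneOn (fun x => sin x / x) (Set.Ioc 0 π) := by
  have hslope := strictConcaveOn_sin_Icc.concaveOn.antitoneOn_slope_gt
    (Set.left_mem_Icc.2 pi_pos.le)
  intro x hx y hy hxy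
  have hx' : x ∈ {z ∈ Set.Icc 0 π | 0 < z} := ⟨Set.Ioc_subset_Icc_self hx, hx.1⟩
  have hy' : y ∈ {z ∈ Set.Icc 0 π | 0 < z} := ⟨Set.Ioc_subset_Icc_self hy, hy.1⟩
  simpa [slope_def_field] using hslope hx' hy' hxy

theorem div_sin_le_div_sin {y t : ℝ} (hy : 0 < y) (hyt : y ≤ t) (ht : t < π) :
    y / sin y ≤ t / sin t := by
  have hsin_t : 0 < sin t / t :=
    div_pos (sin_pos_of_pos_of_lt_pi (hy.trans_le hyt) ht) (hy.trans_le hyt)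
  rw [← inv_div (sin y), ← inv_div (sin t)]
  exact inv_anti₀ hsin_t (antitoneOn_sin_div ⟨hy, (hyt.trans_lt ht).le⟩ ⟨hy.trans_le hyt, ht.le⟩ hyt)

theorem sub_sin_div_mul_sin_neg (x : ℝ) :
    (-x - sin (-x)) / (-x * sin (-x)) = -((x - sin x) / (x * sin x)) := by
  rw [sin_neg]
  ring

theorem abs_sub_sin_div_mul_sin_abs (x : ℝ) :
    |(|x| - sin |x|) / (|x| * sin |x|)| = |(x - sin x) / (x * sin x)| := by
  rcases abs_choice x with h | h <;> rw [h]
  rw [sub_sin_div_mul_sin_neg, abs_neg]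

theorem sub_sin_div_mul_sin_nonneg {x : ℝ} (hx : 0 ≤ x) (hxπ : x ≤ π) :
    0 ≤ (x - sin x) / (x * sin x) :=
  div_nonneg (sub_nonneg.2 (sin_le hx)) (mul_nonneg hx (sin_nonneg_of_nonneg_of_le_pi hx hxπ))

theorem sub_sin_div_mul_sin_le {y t : ℝ} (hy : 0 < y) (hyt : y ≤ t) (ht : t < π) :
    (y - sin y) / (y * sin y) ≤ t / 6 * (t / sin t) := by
  have hsin_y : 0 < sin y := sin_pos_of_pos_of_lt_pi hy (hyt.trans_lt ht)
  calc (y - sin y) / (y * sin y) ≤ y ^ 3 / 6 / (y * sin y) := by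
        gcongr
        linarith [sin_ge_sub_cube hy.le]
    _ = y / 6 * (y / sin y) := by field_simp
    _ ≤ t / 6 * (t / sin t) := mul_le_mul (by linarith) (div_sin_le_div_sin hy hyt ht)
        (div_nonneg hy.le hsin_y.le) (by linarith)

end Real

theorem stmt_4 (W X : ℝ) (hW : W ∈ Set.Ioo 0 (1/2 : ℝ))
    (hX : X ≠ 0) (hX2 : |X| ≤ 2 * π * W) :
    |(X - Real.sin X) / (X * Real.sin X)| ≤ (π * W / 3) * (2 * π * W / Real.sin (2 * π * W)) := by
  have ht : 2 * π * W < π := by nlinarith [hW.2, pi_pos]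
  rw [← abs_sub_sin_div_mul_sin_abs,
    abs_of_nonneg (sub_sin_div_mul_sin_nonneg (abs_nonneg X) (hX2.trans ht.le))]
  calc (|X| - sin |X|) / (|X| * sin |X|) ≤ 2 * π * W / 6 * (2 * π * W / sin (2 * π * W)) :=
        sub_sin_div_mul_sin_le (abs_pos.2 hX) hX2 ht
    _ = π * W / 3 * (2 * π * W / sin (2 * π * W)) := by ring
end

section
/- For any real W with 0 < W < 2/(eπ), any integer N ≥ 2, and any integer k ≥ eπW(N-1)/2, we have Σ_{j=0}^{N-1} |N-1-2j|^k ≤ (N-1)^k · (2 + 2/(eπW)). -/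
open Real Finset

theorem stmt_10 (W : ℝ) (N k : ℕ)
    (hW : 0 < W) (hW2 : W < 2 / (Real.exp 1 * π)) (hN : 2 ≤ N)
    (hk : (Real.exp 1 * π * W * (N - 1)) / 2 ≤ (k : ℝ)) :
    ∑ j ∈ Finset.range N, |((N : ℝ) - 1 - 2 * j)| ^ k ≤
      ((N : ℝ) - 1) ^ k * (2 + 2 / (Real.exp 1 * π * W)) := by
  set c : ℝ := Real.exp 1 * π * W with hc
  have hcpos : 0 < c := by positivity
  set M : ℝ := (N : ℝ) - 1 with hM
  have hM1 : (1:ℝ) ≤ M := by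
    have : (2:ℝ) ≤ N := by exact_mod_cast hN
    simp [hM]; linarith
  have hMpos : 0 < M := lt_of_lt_of_le one_pos hM1
  have hkpos : (0:ℝ) < k := lt_of_lt_of_le (by positivity) hk
  set q : ℝ := Real.exp (-(2 * k) / M) with hq
  have hq0 : 0 ≤ q := (Real.exp_pos _).le
  have hq1 : q < 1 := by
    rw [hq, Real.exp_lt_one_iff]
    have : 0 < 2 * (k:ℝ) := by positivity
    exact div_neg_of_neg_of_pos (by linarith) hMpos
  -- step 1: termwise bound
  have step1 : ∀ j ∈ Finset.range N,
      |((N : ℝ) - 1 - 2 * j)| ^ k ≤ M ^ k * q ^ (min j (N - 1 - j)) := by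
    intro j hj
    rw [Finset.mem_range] at hj
    set d : ℕ := min j (N - 1 - j) with hd
    have habs : |((N : ℝ) - 1 - 2 * j)| = M - 2 * d := by
      rcases le_or_gt (2 * j) (N - 1) with h | h
      · have hdj : d = j := by omega
        rw [abs_of_nonneg]
        · rw [hdj]
        · have h' : (2*j+1 : ℕ) ≤ N := by omega
          have := (Nat.cast_le (α := ℝ)).2 h'
          push_cast at this; linarith
      · have hdj : d = N - 1 - j := by omega
        have h2 : ((N:ℝ) - 1) < 2 * j := by
          have h' : N ≤ 2*j := by omega
          have := (Nat.cast_le (α := ℝ)).2 h'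
          push_cast at this; linarith
        rw [abs_of_nonpos (by linarith), hdj]
        have : ((N - 1 - j : ℕ) : ℝ) = (N:ℝ) - 1 - j := by
          rw [Nat.cast_sub (by omega : j ≤ N - 1), Nat.cast_sub (by omega : 1 ≤ N)]
          norm_num
        rw [this]; ring
    rw [habs]
    have hd2 : 2 * (d:ℝ) ≤ M := by
      have : 2 * d ≤ N - 1 := by omega
      have := (Nat.cast_le (α := ℝ)).2 this
      push_cast at this
      have hN1 : ((N - 1 : ℕ):ℝ) = (N:ℝ) - 1 := by
        push_cast [Nat.cast_sub (by omega : 1 ≤ N)]; ring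
      simp [hM]; linarith [this]
    have key : M - 2 * d ≤ M * Real.exp (-(2 * d) / M) := by
      have h1 : 1 - 2 * (d:ℝ) / M ≤ Real.exp (-(2 * d) / M) := by
        have := Real.add_one_le_exp (-(2 * (d:ℝ)) / M)
        calc 1 - 2 * (d:ℝ) / M = -(2 * d) / M + 1 := by ring
        _ ≤ _ := this
      calc M - 2 * d = M * (1 - 2 * d / M) := by field_simp
      _ ≤ M * Real.exp (-(2 * d) / M) := by
          exact mul_le_mul_of_nonneg_left h1 hMpos.le
    calc (M - 2 * d) ^ k ≤ (M * Real.exp (-(2 * d) / M)) ^ k := by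
          apply pow_le_pow_left₀ (by linarith) key
    _ = M ^ k * (Real.exp (-(2 * d) / M)) ^ k := mul_pow _ _ _
    _ = M ^ k * q ^ d := by
          congr 1
          rw [hq, ← Real.exp_nat_mul, ← Real.exp_nat_mul]
          congr 1
          ring
  calc ∑ j ∈ Finset.range N, |((N : ℝ) - 1 - 2 * j)| ^ k
      ≤ ∑ j ∈ Finset.range N, M ^ k * q ^ (min j (N - 1 - j)) :=
        Finset.sum_le_sum step1
    _ = M ^ k * ∑ j ∈ Finset.range N, q ^ (min j (N - 1 - j)) := by
        rw [Finset.mul_sum]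
    _ ≤ M ^ k * (2 * (1 - q)⁻¹) := by
        apply mul_le_mul_of_nonneg_left _ (by positivity)
        have hsplit : ∀ j ∈ Finset.range N,
            q ^ (min j (N - 1 - j)) ≤ q ^ j + q ^ (N - 1 - j) := by
          intro j hj
          rcases min_cases j (N - 1 - j) with ⟨h1, _⟩ | ⟨h1, _⟩ <;> rw [h1]
          · nlinarith [pow_nonneg hq0 (N - 1 - j)]
          · nlinarith [pow_nonneg hq0 j]
        calc ∑ j ∈ Finset.range N, q ^ (min j (N - 1 - j))
            ≤ ∑ j ∈ Finset.range N, (q ^ j + q ^ (N - 1 - j)) :=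
              Finset.sum_le_sum hsplit
          _ = ∑ j ∈ Finset.range N, q ^ j + ∑ j ∈ Finset.range N, q ^ (N - 1 - j) :=
              Finset.sum_add_distrib
          _ = 2 * ∑ j ∈ Finset.range N, q ^ j := by
              rw [two_mul]
              congr 1
              rw [← Finset.sum_range_reflect]
              apply Finset.sum_congr rfl
              intro j hj
              rw [Finset.mem_range] at hj
              congr 1
              omega
          _ ≤ 2 * (1 - q)⁻¹ := by
              apply mul_le_mul_of_nonneg_left _ (by norm_num)
              calc ∑ j ∈ Finset.range N, q ^ j ≤ ∑' j : ℕ, q ^ j :=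
                    Summable.sum_le_tsum _ (fun i _ => pow_nonneg hq0 i)
                      (summable_geometric_of_lt_one hq0 hq1)
                _ = (1 - q)⁻¹ := tsum_geometric_of_lt_one hq0 hq1
    _ ≤ M ^ k * (2 + 2 / c) := by
        apply mul_le_mul_of_nonneg_left _ (by positivity)
        -- q ≤ exp (-c), then (1-q)⁻¹ ≤ 1 + 1/c
        have hqc : q ≤ Real.exp (-c) := by
          rw [hq, Real.exp_le_exp]
          rw [div_le_iff₀ hMpos, neg_mul, neg_le_neg_iff]
          nlinarith [hk, hMpos]
        have hec : Real.exp (-c) < 1 := by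
          rw [Real.exp_lt_one_iff]; linarith
        have h1q : 0 < 1 - q := by linarith
        have key2 : (1 - q)⁻¹ ≤ 1 + 1/c := by
          rw [inv_le_iff_one_le_mul₀ h1q]
          have hcexp : (c + 1) * Real.exp (-c) ≤ 1 := by
            have h := Real.add_one_le_exp c
            rw [Real.exp_neg]
            rw [mul_inv_le_iff₀ (Real.exp_pos c)]
            linarith
          have : (1 + 1/c) * (1 - Real.exp (-c)) ≤ (1 + 1/c) * (1 - q) := by
            apply mul_le_mul_of_nonneg_left (by linarith) (by positivity)
          have h2 : 1 ≤ (1 + 1/c) * (1 - Real.exp (-c)) := by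
            have : (1 + 1/c) * (1 - Real.exp (-c)) = 1 + (1 - (c+1) * Real.exp (-c))/c := by
              field_simp; ring
            rw [this]
            have : 0 ≤ (1 - (c+1) * Real.exp (-c))/c := by
              apply div_nonneg (by linarith) hcpos.le
            linarith
          linarith
        calc 2 * (1 - q)⁻¹ ≤ 2 * (1 + 1/c) := by linarith
        _ = 2 + 2/c := by ring
end

section
/- For W ∈ (0,1/2), the constant A_W = (2π²/cos²(πW)) · (1/4 - W²)² satisfies π²/8 ≤ A_W ≤ 2. -/
/-!
Put `t = 1/4 - W²`, so that `A_W = 2 (π t / cos (π W))²`, and the claim is the two-sided estimate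
`π t ≤ cos (π W) ≤ 4 t`. The upper bound is `cos x ≤ 1 - 4 x² / π²` on `[-π/2, π/2]`, which comes
from `cos x = 1 - 2 sin² (x/2)` and the chord of the concave function `sin` over `[0, π/4]`.
The lower bound is `sin x ≥ x (π - x) / π` on `[0, π]` at `x = π (1/2 - W)`; by the symmetry
`x ↦ π - x` it suffices to take `x ≤ π/2`, where it follows from `sin x ≥ x - x³/6`.
-/

open Real

lemma sin_div_mul_le_sin {a x : ℝ} (ha : 0 < a) (ha' : a ≤ π) (hx : 0 ≤ x) (hxa : x ≤ a) :
    sin a / a * x ≤ sin x := by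
  have h := strictConcaveOn_sin_Icc.concaveOn.2 (x := 0) (y := a) ⟨le_rfl, pi_pos.le⟩
    ⟨ha.le, ha'⟩ (sub_nonneg.2 ((div_le_one ha).2 hxa)) (div_nonneg hx ha.le) (by ring)
  have hseg : (1 - x / a) • (0 : ℝ) + (x / a) • a = x := by
    simp only [smul_eq_mul, mul_zero, zero_add, div_mul_cancel₀ x ha.ne']
  rw [hseg, sin_zero, smul_eq_mul, smul_eq_mul, mul_zero, zero_add] at h
  calc sin a / a * x = x / a * sin a := by ring
    _ ≤ sin x := h

lemma cos_le_one_sub_mul_sq {x : ℝ} (hx : |x| ≤ π / 2) : cos x ≤ 1 - 4 / π ^ 2 * x ^ 2 := by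
  wlog hx₀ : 0 ≤ x
  case inr => simpa using this (by rwa [abs_neg]) (neg_nonneg.2 (le_of_not_ge hx₀))
  rw [abs_of_nonneg hx₀] at hx
  have hchord : √2 / π * x ≤ sin (x / 2) := by
    have := sin_div_mul_le_sin (a := π / 4) (x := x / 2) (by positivity) (by linarith [pi_pos])
      (by positivity) (by linarith)
    rwa [sin_pi_div_four, show √2 / 2 / (π / 4) * (x / 2) = √2 / π * x by
      field_simp; ring] at this
  have hsq := (pow_le_pow_left₀ (by positivity) hchord 2).trans_eq (sin_sq_eq_half_sub _)
  rw [mul_pow, div_pow, sq_sqrt zero_le_two, show 2 * (x / 2) = x by ring] at hsq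
  have : 4 / π ^ 2 * x ^ 2 = 2 * (2 / π ^ 2 * x ^ 2) := by ring
  linarith

lemma mul_pi_sub_div_pi_le_sin {x : ℝ} (hx₀ : 0 ≤ x) (hx : x ≤ π) :
    x * (π - x) / π ≤ sin x := by
  wlog hx₂ : x ≤ π / 2
  case inr =>
    simpa [sin_pi_sub, mul_comm x] using
      this (x := π - x) (by linarith) (by linarith) (by linarith)
  have hcube : x ^ 3 / 6 ≤ x ^ 2 / π := by
    rw [div_le_div_iff₀ (by norm_num) pi_pos]
    have hπsq : π ^ 2 < 12 := by nlinarith [pi_lt_d2, pi_pos]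
    have : x * π ≤ 6 := by nlinarith [pi_pos]
    nlinarith [mul_le_mul_of_nonneg_left this (sq_nonneg x)]
  calc x * (π - x) / π = x - x ^ 2 / π := by field_simp
    _ ≤ x - x ^ 3 / 6 := by linarith
    _ ≤ sin x := sin_ge_sub_cube hx₀

theorem stmt_13 (W : ℝ) (hW : W ∈ Set.Ioo 0 (1/2 : ℝ)) :
    π ^ 2 / 8 ≤ (2 * π ^ 2 / Real.cos (π * W) ^ 2) * (1/4 - W ^ 2) ^ 2 ∧
    (2 * π ^ 2 / Real.cos (π * W) ^ 2) * (1/4 - W ^ 2) ^ 2 ≤ 2 := by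
  obtain ⟨hW₀, hW₁⟩ := hW
  have hπ := pi_pos
  have ht : 0 < 1/4 - W ^ 2 := by nlinarith
  have hcos_pos : 0 < cos (π * W) := cos_pos_of_mem_Ioo ⟨by nlinarith, by nlinarith⟩
  have hcos_le : cos (π * W) ≤ 4 * (1/4 - W ^ 2) := by
    have := cos_le_one_sub_mul_sq (x := π * W) (by rw [abs_of_pos (by positivity)]; nlinarith)
    rw [mul_pow, ← mul_assoc, div_mul_cancel₀ _ (by positivity)] at this
    linarith
  have hle_cos : π * (1/4 - W ^ 2) ≤ cos (π * W) := by
    have := mul_pi_sub_div_pi_le_sin (x := π * (1/2 - W)) (by nlinarith) (by nlinarith)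
    rwa [show π * (1/2 - W) = π / 2 - π * W by ring, sin_pi_div_two_sub,
      show (π / 2 - π * W) * (π - (π / 2 - π * W)) / π = π * (1/4 - W ^ 2) by
        field_simp; ring] at this
  rw [div_mul_eq_mul_div, le_div_iff₀ (by positivity), div_le_iff₀ (by positivity)]
  constructor
  · nlinarith [pow_le_pow_left₀ hcos_pos.le hcos_le 2]
  · nlinarith [pow_le_pow_left₀ (by positivity) hle_cos 2]
end

section
/- For the Hilbert–Schmidt norm difference of the kernels: for any W ∈ (0,1/2) and integer N ≥ 1, ∫_{-W}^{W} ∫_{-W}^{W} ( sin(Nπ(x-y))/sin(π(x-y)) - sin(Nπ(x-y))/(π(x-y)) )² dx dy ≤ 4W² ( W² · 2π²/(3 sin(2πW)) )². -/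
/-!
Off the diagonal the integrand is `sin (N π t) ² · (1 / sin (π t) - 1 / (π t)) ²` with
`t = x - y`, `|π t| ≤ 2 π W < π`. From `|u - sin u| ≤ |u|³ / 6` one gets
`|1 / sin u - 1 / u| ≤ u² / (6 sin |u|)`, and concavity of `sin` on `[0, π]` makes
`u ↦ u² / sin u` increasing there, so the integrand is bounded by the square of
`(2 π W)² / (6 sin (2 π W))` on the whole square of area `4 W²`.
-/

open Real Set Interval

theorem Real.mul_sin_le_mul_sin {s S : ℝ} (hs : 0 < s) (hsS : s ≤ S) (hS : S ≤ π) :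
    s * sin S ≤ S * sin s := by
  have hmem : ∀ u, 0 < u → u ≤ π → u ∈ {y ∈ Icc 0 π | 0 < y} := fun u hu huπ ↦
    ⟨⟨hu.le, huπ⟩, hu⟩
  have hslope := strictConcaveOn_sin_Icc.concaveOn.antitoneOn_slope_gt
    (left_mem_Icc.2 pi_pos.le) (hmem s hs (hsS.trans hS)) (hmem S (hs.trans_le hsS) hS) hsS
  simp only [slope_def_field, sin_zero, sub_zero] at hslope
  rw [div_le_div_iff₀ (hs.trans_le hsS) hs] at hslope
  linarith

theorem Real.sq_div_sin_le_sq_div_sin {s S : ℝ} (hs : 0 < s) (hsS : s ≤ S) (hS : S < π) :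
    s ^ 2 / sin s ≤ S ^ 2 / sin S := by
  have hsin_s : 0 < sin s := sin_pos_of_pos_of_lt_pi hs (hsS.trans_lt hS)
  have hsin_S : 0 < sin S := sin_pos_of_pos_of_lt_pi (hs.trans_le hsS) hS
  rw [div_le_div_iff₀ hsin_s hsin_S]
  calc s ^ 2 * sin S = s * (s * sin S) := by ring
    _ ≤ S * (S * sin s) :=
        mul_le_mul hsS (mul_sin_le_mul_sin hs hsS hS.le) (mul_pos hs hsin_S).le (hs.trans_le hsS).le
    _ = S ^ 2 * sin s := by ring

theorem Real.abs_inv_sin_sub_inv_le {t S : ℝ} (ht : t ≠ 0) (htS : |t| ≤ S) (hS : S < π) :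
    |(sin t)⁻¹ - t⁻¹| ≤ S ^ 2 / (6 * sin S) := by
  have habs_t : 0 < |t| := abs_pos.2 ht
  have habs_sin : |sin t| = sin |t| := abs_sin_eq_sin_abs_of_abs_le_pi (htS.trans hS.le)
  have hsin_pos : 0 < sin |t| := sin_pos_of_pos_of_lt_pi habs_t (htS.trans_lt hS)
  have hsin_ne : sin t ≠ 0 := abs_pos.1 (habs_sin ▸ hsin_pos)
  calc |(sin t)⁻¹ - t⁻¹| = |t - sin t| / (|t| * sin |t|) := by
        rw [inv_sub_inv hsin_ne ht, abs_div, abs_mul, habs_sin, mul_comm]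
    _ ≤ |t| ^ 3 / 6 / (|t| * sin |t|) := by gcongr; exact abs_sub_sin_le t
    _ = |t| ^ 2 / sin |t| / 6 := by field_simp
    _ ≤ S ^ 2 / sin S / 6 :=
        div_le_div_of_nonneg_right (sq_div_sin_le_sq_div_sin habs_t htS hS) (by norm_num)
    _ = S ^ 2 / (6 * sin S) := by ring

theorem Real.sq_sin_div_sin_sub_sin_div_le (a : ℝ) {t S : ℝ} (ht : t ≠ 0) (htS : |t| ≤ S)
    (hS : S < π) : (sin a / sin t - sin a / t) ^ 2 ≤ (S ^ 2 / (6 * sin S)) ^ 2 := by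
  have hdiff : |sin a / sin t - sin a / t| ≤ S ^ 2 / (6 * sin S) := by
    rw [div_eq_mul_inv, div_eq_mul_inv, ← mul_sub, abs_mul]
    calc |sin a| * |(sin t)⁻¹ - t⁻¹| ≤ 1 * (S ^ 2 / (6 * sin S)) := by
          gcongr
          · exact abs_sin_le_one a
          · exact abs_inv_sin_sub_inv_le ht htS hS
      _ = S ^ 2 / (6 * sin S) := one_mul _
  simpa only [sq_abs] using pow_le_pow_left₀ (abs_nonneg _) hdiff 2

theorem intervalIntegral.norm_integral_integral_le_of_norm_le_const {E : Type*}
    [NormedAddCommGroup E] [NormedSpace ℝ E] {f : ℝ → ℝ → E} {a b C : ℝ}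
    (h : ∀ x ∈ Ι a b, ∀ y ∈ Ι a b, ‖f x y‖ ≤ C) :
    ‖∫ x in a..b, ∫ y in a..b, f x y‖ ≤ C * |b - a| ^ 2 := by
  calc ‖∫ x in a..b, ∫ y in a..b, f x y‖ ≤ C * |b - a| * |b - a| :=
        norm_integral_le_of_norm_le_const fun x hx ↦ norm_integral_le_of_norm_le_const (h x hx)
    _ = C * |b - a| ^ 2 := by ring

theorem stmt_17_general (W : ℝ) (N : ℕ) (hW : W ∈ Set.Ioo 0 (1/2 : ℝ)) :
    (∫ x in (-W)..W, ∫ y in (-W)..W,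
        (if x = y then (0 : ℝ)
         else (Real.sin (N * π * (x - y)) / Real.sin (π * (x - y)) -
               Real.sin (N * π * (x - y)) / (π * (x - y))) ^ 2)) ≤
      4 * W ^ 2 * (W ^ 2 * (2 * π ^ 2) / (3 * Real.sin (2 * π * W))) ^ 2 := by
  obtain ⟨hW0, hW2⟩ := hW
  have hS : 2 * π * W < π := by nlinarith [pi_pos]
  have hC : W ^ 2 * (2 * π ^ 2) / (3 * sin (2 * π * W)) =
      (2 * π * W) ^ 2 / (6 * sin (2 * π * W)) := by ring
  refine (le_abs_self _).trans ?_
  calc _ ≤ (W ^ 2 * (2 * π ^ 2) / (3 * sin (2 * π * W))) ^ 2 * |W - -W| ^ 2 := by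
        refine intervalIntegral.norm_integral_integral_le_of_norm_le_const (E := ℝ)
          fun x hx y hy ↦ ?_
        rw [uIoc_of_le (by linarith)] at hx hy
        split_ifs with hxy
        · rw [norm_zero]; positivity
        rw [Real.norm_of_nonneg (sq_nonneg _), hC]
        refine sq_sin_div_sin_sub_sin_div_le _ (by simp [sub_eq_zero, hxy, pi_ne_zero]) ?_ hS
        rw [abs_mul, abs_of_pos pi_pos, mul_comm 2 π, mul_assoc]
        gcongr
        exact abs_sub_le_iff.2 ⟨by linarith [hx.2, hy.1], by linarith [hx.1, hy.2]⟩
    _ = _ := by rw [abs_of_pos (by linarith)]; ring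

theorem stmt_17 (W : ℝ) (N : ℕ) (hW : W ∈ Set.Ioo 0 (1/2 : ℝ)) (hN : 1 ≤ N) :
    (∫ x in (-W)..W, ∫ y in (-W)..W,
        (if x = y then (0 : ℝ)
         else (Real.sin (N * π * (x - y)) / Real.sin (π * (x - y)) -
               Real.sin (N * π * (x - y)) / (π * (x - y))) ^ 2)) ≤
      4 * W ^ 2 * (W ^ 2 * (2 * π ^ 2) / (3 * Real.sin (2 * π * W))) ^ 2 :=
  stmt_17_general W N hW
end
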